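/- Let M be a nonempty set and ξ, N, V : M → ℝ^(n+2) maps such that for every p ∈ M: η(ξ p, ξ p) = 0, η(N p, N p) = 0, η(ξ p, N p) = 1 and η(V p, V p) ≠ 0, and assume there is ε ∈ {-1, 1} with ε * η(V p, V p) > 0 for all p ∈ M. Write |V p| := √(ε * η(V p, V p)) and V*(p) := V p - η(V p, N p) • ξ p - η(V p, ξ p) • N p. Then: (A) the function p ↦ η(V p, ξ p) * η(V p, N p) / |V p|^2 is constant on M if and only if the function p ↦ η(V* p, V* p) / |V p|^2 is constant on M; (B) if in addition η(V p, ξ p) * η(V p, N p) ≠ 0 for every p ∈ M, then these conditions are further equivalent to: there exists f : M → ℝ with f p ≠ 0 for all p such that both angle functions p ↦ η(V p, f p • ξ p)/|V p| and p ↦ η(V p, (f p)⁻¹ • N p)/|V p| are constant on M (i.e., the null hypersurface has constant angle with respect to V in some gauge of the null frame). -/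

import Mathlib

open scoped BigOperators

noncomputable section

/-- Euclidean space `ℝ^m`. -/
abbrev E (m : ℕ) : Type := EuclideanSpace ℝ (Fin m)

/-- The Minkowski bilinear form `η(x,y) = -(x 0)(y 0) + ∑_{i≥1} (x i)(y i)` on `ℝ^(n+2)`. -/
def eta {n : ℕ} (x y : E (n + 2)) : ℝ :=
  (∑ i, x i * y i) - 2 * (x 0 * y 0)

/-- Screen projection `P_p(w) = w - η(w,N)ξ - η(w,ξ)N` determined by the null frame at a point. -/
def sproj {n : ℕ} (xi N w : E (n + 2)) : E (n + 2) :=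
  w - eta w N • xi - eta w xi • N

/-- Screen shape operator `A*_ξ(p)(v) = -P_p(D_v ξ (p))`. -/
def Astar {n : ℕ} (xi N : E (n + 2) → E (n + 2)) (p v : E (n + 2)) : E (n + 2) :=
  -sproj (xi p) (N p) (fderiv ℝ xi p v)

/-- Shape operator `A_N(p)(v) = -P_p(D_v N (p))`. -/
def AN {n : ℕ} (xi N : E (n + 2) → E (n + 2)) (p v : E (n + 2)) : E (n + 2) :=
  -sproj (xi p) (N p) (fderiv ℝ N p v)

/-- Transversal one-form `τ_p(v) = η(D_v N(p), ξ p)`. -/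
def tau {n : ℕ} (xi N : E (n + 2) → E (n + 2)) (p v : E (n + 2)) : ℝ :=
  eta (fderiv ℝ N p v) (xi p)

/-- Screen part `Z*(p) = P_p(Z p)` of a vector field. -/
def Zstar {n : ℕ} (xi N Z : E (n + 2) → E (n + 2)) (p : E (n + 2)) : E (n + 2) :=
  sproj (xi p) (N p) (Z p)

/-- `A_{Z⊥}(p)(v) = η(Z p, N p) • A*_ξ(p)(v) + η(Z p, ξ p) • A_N(p)(v)`. -/
def AZperp {n : ℕ} (xi N Z : E (n + 2) → E (n + 2)) (p v : E (n + 2)) : E (n + 2) :=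
  eta (Z p) (N p) • Astar xi N p v + eta (Z p) (xi p) • AN xi N p v

/-!
Everything reduces to pointwise algebra in the null frame.  Expanding the screen projection gives
`η(V*, V*) = η(V, V) - 2 η(V, ξ) η(V, N)`, and `η(V, V) / |V|² = ε⁻¹` is constant, so `η(V*, V*) / |V|²`
is an affine function of the product `η(V, ξ) η(V, N) / |V|²`.  The product of the two angle functions
does not change under a gauge `(f ξ, f⁻¹ N)`; conversely, if it is constant, the gauge
`f = |V| / η(V, ξ)` makes the first angle function identically `1` and the second equal to that product.
-/

section Eta

variable {n : ℕ}

lemma eta_comm (x y : E (n + 2)) : eta x y = eta y x := by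
  simp only [eta, mul_comm]

lemma eta_sub_left (x y z : E (n + 2)) : eta (x - y) z = eta x z - eta y z := by
  simp only [eta, PiLp.sub_apply, sub_mul, Finset.sum_sub_distrib]
  ring

lemma eta_sub_right (x y z : E (n + 2)) : eta x (y - z) = eta x y - eta x z := by
  rw [eta_comm, eta_sub_left, eta_comm y, eta_comm z]

lemma eta_smul_left (c : ℝ) (x y : E (n + 2)) : eta (c • x) y = c * eta x y := by
  simp only [eta, PiLp.smul_apply, smul_eq_mul, mul_assoc, ← Finset.mul_sum]
  ring

lemma eta_smul_right (c : ℝ) (x y : E (n + 2)) : eta x (c • y) = c * eta x y := by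
  rw [eta_comm, eta_smul_left, eta_comm]

lemma eta_sproj_self {xi N : E (n + 2)} (hξξ : eta xi xi = 0) (hNN : eta N N = 0)
    (hξN : eta xi N = 1) (w : E (n + 2)) :
    eta (sproj xi N w) (sproj xi N w) = eta w w - 2 * (eta w xi * eta w N) := by
  simp only [sproj, eta_sub_left, eta_sub_right, eta_smul_left, eta_smul_right]
  rw [eta_comm xi w, eta_comm N w, eta_comm N xi, hξξ, hNN, hξN]
  ring

end Eta

lemma div_sq_sqrt_mul {ε x : ℝ} (h : 0 < ε * x) : x / Real.sqrt (ε * x) ^ 2 = ε⁻¹ := by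
  have hε : ε ≠ 0 := by rintro rfl; simp at h
  have hx : x ≠ 0 := by rintro rfl; simp at h
  rw [Real.sq_sqrt h.le]
  field_simp

lemma eta_sproj_self_div_sq_sqrt {n : ℕ} {xi N : E (n + 2)} (hξξ : eta xi xi = 0)
    (hNN : eta N N = 0) (hξN : eta xi N = 1) {ε : ℝ} {w : E (n + 2)} (hw : 0 < ε * eta w w) :
    eta (sproj xi N w) (sproj xi N w) / Real.sqrt (ε * eta w w) ^ 2 =
      ε⁻¹ - 2 * (eta w xi * eta w N / Real.sqrt (ε * eta w w) ^ 2) := by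
  rw [eta_sproj_self hξξ hNN hξN, sub_div, div_sq_sqrt_mul hw, mul_div_assoc]

lemma exists_gauge_const_iff_const_mul_div_sq {M : Type*} {a b s : M → ℝ} (ha : ∀ p, a p ≠ 0)
    (hs : ∀ p, s p ≠ 0) :
    (∀ p q, a p * b p / s p ^ 2 = a q * b q / s q ^ 2) ↔
      ∃ f : M → ℝ, (∀ p, f p ≠ 0) ∧
        (∀ p q, f p * a p / s p = f q * a q / s q) ∧
        (∀ p q, (f p)⁻¹ * b p / s p = (f q)⁻¹ * b q / s q) := by
  have gauge_invariant : ∀ {f : ℝ} (p : M), f ≠ 0 →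
      f * a p / s p * (f⁻¹ * b p / s p) = a p * b p / s p ^ 2 := by
    intro f p hf
    field_simp [hs p]
  constructor
  · intro h
    refine ⟨fun p => s p / a p, fun p => div_ne_zero (hs p) (ha p), fun p q => ?_, fun p q => ?_⟩
    · simp only [div_mul_cancel₀ _ (ha _), div_self (hs _)]
    · simpa only [inv_div, div_mul_eq_mul_div, div_div, ← sq] using h p q
  · rintro ⟨f, hf, hξ, hN⟩ p q
    rw [← gauge_invariant p (hf p), ← gauge_invariant q (hf q), hξ p q, hN p q]

theorem constant_angle_characterizations_general {n : ℕ} (M : Type*)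
    (ξ N V : M → E (n + 2)) (ε : ℝ)
    (hξξ : ∀ p, eta (ξ p) (ξ p) = 0)
    (hNN : ∀ p, eta (N p) (N p) = 0)
    (hξN : ∀ p, eta (ξ p) (N p) = 1)
    (hεV : ∀ p, 0 < ε * eta (V p) (V p)) :
    ((∀ p q : M,
        eta (V p) (ξ p) * eta (V p) (N p) / (Real.sqrt (ε * eta (V p) (V p))) ^ 2 =
        eta (V q) (ξ q) * eta (V q) (N q) / (Real.sqrt (ε * eta (V q) (V q))) ^ 2) ↔
      (∀ p q : M,
        eta (sproj (ξ p) (N p) (V p)) (sproj (ξ p) (N p) (V p))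
            / (Real.sqrt (ε * eta (V p) (V p))) ^ 2 =
        eta (sproj (ξ q) (N q) (V q)) (sproj (ξ q) (N q) (V q))
            / (Real.sqrt (ε * eta (V q) (V q))) ^ 2)) ∧
    ((∀ p, eta (V p) (ξ p) * eta (V p) (N p) ≠ 0) →
      ((∀ p q : M,
          eta (V p) (ξ p) * eta (V p) (N p) / (Real.sqrt (ε * eta (V p) (V p))) ^ 2 =
          eta (V q) (ξ q) * eta (V q) (N q) / (Real.sqrt (ε * eta (V q) (V q))) ^ 2) ↔
        ∃ f : M → ℝ, (∀ p, f p ≠ 0) ∧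
          (∀ p q : M,
            eta (V p) (f p • ξ p) / Real.sqrt (ε * eta (V p) (V p)) =
            eta (V q) (f q • ξ q) / Real.sqrt (ε * eta (V q) (V q))) ∧
          (∀ p q : M,
            eta (V p) ((f p)⁻¹ • N p) / Real.sqrt (ε * eta (V p) (V p)) =
            eta (V q) ((f q)⁻¹ • N q) / Real.sqrt (ε * eta (V q) (V q))))) := by
  have hs : ∀ p, Real.sqrt (ε * eta (V p) (V p)) ≠ 0 := fun p => (Real.sqrt_pos.2 (hεV p)).ne'
  refine ⟨?_, fun hne => ?_⟩
  · simp only [eta_sproj_self_div_sq_sqrt (hξξ _) (hNN _) (hξN _) (hεV _)]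
    exact forall₂_congr fun p q => by constructor <;> intro h <;> linarith
  · have hVξ : ∀ p, eta (V p) (ξ p) ≠ 0 := fun p => left_ne_zero_of_mul (hne p)
    simp only [eta_smul_right]
    exact exists_gauge_const_iff_const_mul_div_sq hVξ hs

/-- Characterizations of the constant angle condition for a null hypersurface
with respect to a nowhere null field: constancy of the product of the angle functions is
equivalent to constancy of `η(V*,V*)/|V|²`, and (when both null components never vanish) to
the existence of a gauge of the null frame making both angle functions constant. -/
theorem constant_angle_characterizations {n : ℕ} (M : Type*) [Nonempty M]
    (ξ N V : M → E (n + 2)) (ε : ℝ)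
    (hξξ : ∀ p, eta (ξ p) (ξ p) = 0)
    (hNN : ∀ p, eta (N p) (N p) = 0)
    (hξN : ∀ p, eta (ξ p) (N p) = 1)
    (hV0 : ∀ p, eta (V p) (V p) ≠ 0)
    (hε : ε = -1 ∨ ε = 1)
    (hεV : ∀ p, 0 < ε * eta (V p) (V p)) :
    ((∀ p q : M,
        eta (V p) (ξ p) * eta (V p) (N p) / (Real.sqrt (ε * eta (V p) (V p))) ^ 2 =
        eta (V q) (ξ q) * eta (V q) (N q) / (Real.sqrt (ε * eta (V q) (V q))) ^ 2) ↔
      (∀ p q : M,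
        eta (sproj (ξ p) (N p) (V p)) (sproj (ξ p) (N p) (V p))
            / (Real.sqrt (ε * eta (V p) (V p))) ^ 2 =
        eta (sproj (ξ q) (N q) (V q)) (sproj (ξ q) (N q) (V q))
            / (Real.sqrt (ε * eta (V q) (V q))) ^ 2)) ∧
    ((∀ p, eta (V p) (ξ p) * eta (V p) (N p) ≠ 0) →
      ((∀ p q : M,
          eta (V p) (ξ p) * eta (V p) (N p) / (Real.sqrt (ε * eta (V p) (V p))) ^ 2 =
          eta (V q) (ξ q) * eta (V q) (N q) / (Real.sqrt (ε * eta (V q) (V q))) ^ 2) ↔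
        ∃ f : M → ℝ, (∀ p, f p ≠ 0) ∧
          (∀ p q : M,
            eta (V p) (f p • ξ p) / Real.sqrt (ε * eta (V p) (V p)) =
            eta (V q) (f q • ξ q) / Real.sqrt (ε * eta (V q) (V q))) ∧
          (∀ p q : M,
            eta (V p) ((f p)⁻¹ • N p) / Real.sqrt (ε * eta (V p) (V p)) =
            eta (V q) ((f q)⁻¹ • N q) / Real.sqrt (ε * eta (V q) (V q))))) :=
  constant_angle_characterizations_general M ξ N V ε hξξ hNN hξN hεV

end
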